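/- For integers k ≥ 0 and l ≤ −2, ∑_{a=0}^{k} ∑_{b=0}^{−l+1} (−1)^a C(2k+1,a)·C(−l+1,b)·C(k+1−a, −b−2l+1) = (−1)^{l+k+1}·C(2k+2l−1, l+k+1). -/
import Mathlib


/-- Generalized binomial coefficient: `0` for `k < 0`; usual binomial for `n ≥ 0`
(zero when `k > n`); for `n < 0`: `(-1)^k * C (k - n - 1) k` when `k ≥ 0`,
`(-1)^(n-k) * C (-k - 1) (n - k)` when `k ≤ n`, and `0` otherwise. -/
def C (n k : ℤ) : ℤ :=
  if 0 ≤ n then (if 0 ≤ k then (n.toNat.choose k.toNat : ℤ) else 0)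
  else if 0 ≤ k then (-1) ^ k.toNat * ((k - n - 1).toNat.choose k.toNat : ℤ)
  else if k ≤ n then (-1) ^ (n - k).toNat * ((-k - 1).toNat.choose (n - k).toNat : ℤ)
  else 0

/-- binomial coefficient vanishing for negative lower index -/
def C' (n k : ℤ) : ℤ :=
  if 0 ≤ k then
    (if 0 ≤ n then (n.toNat.choose k.toNat : ℤ)
     else (-1) ^ k.toNat * ((k - n - 1).toNat.choose k.toNat : ℤ))
  else 0

lemma C'_neg {n k : ℤ} (h : k < 0) : C' n k = 0 := by simp [C', not_le.2 h]

lemma C'_zero (n : ℤ) : C' n 0 = 1 := by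
  unfold C'
  rw [if_pos le_rfl]
  split_ifs <;> simp

lemma C'_nat (n m : ℕ) : C' n m = n.choose m := by simp [C']

lemma C_eq_C' {n : ℤ} (h : 0 ≤ n) (k : ℤ) : C n k = C' n k := by
  simp [C, C', h]

lemma pascal' (n t : ℤ) : C' (n + 1) t = C' n t + C' n (t - 1) := by
  by_cases ht : 0 ≤ t
  · by_cases ht0 : t = 0
    · subst ht0
      rw [C'_zero, C'_zero, C'_neg (by norm_num)]; ring
    · have ht1 : 1 ≤ t := by omega
      have htn : t.toNat = (t - 1).toNat + 1 := by omega
      by_cases hn : 0 ≤ n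
      · have hn1 : (0:ℤ) ≤ n + 1 := by omega
        simp only [C', if_pos ht, if_pos (by omega : (0:ℤ) ≤ t - 1), if_pos hn, if_pos hn1]
        have h2 : (n + 1).toNat = n.toNat + 1 := by omega
        rw [h2, htn, Nat.choose_succ_succ]
        push_cast; ring
      · by_cases hn1 : n = -1
        · subst hn1
          simp only [C', if_pos ht, if_pos (by omega : (0:ℤ) ≤ t - 1), if_pos (by norm_num : (0:ℤ) ≤ -1 + 1),
            if_neg (by norm_num : ¬ (0:ℤ) ≤ -1)]
          have e1 : (t - -1 - 1).toNat = t.toNat := by omega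
          have e2 : (t - 1 - -1 - 1).toNat = (t - 1).toNat := by omega
          rw [e1, e2, Nat.choose_self, Nat.choose_self, htn, pow_succ,
            show ((-1+1:ℤ)).toNat = 0 by norm_num, Nat.choose_eq_zero_of_lt (by omega)]
          push_cast; ring
        · have hn2 : ¬ (0:ℤ) ≤ n + 1 := by omega
          simp only [C', if_pos ht, if_pos (by omega : (0:ℤ) ≤ t - 1), if_neg hn, if_neg hn2]
          have e1 : (t - (n + 1) - 1).toNat = (t - n - 2).toNat := by ring_nf
          have e2 : (t - n - 1).toNat = (t - n - 2).toNat + 1 := by omega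
          have e3 : (t - 1 - n - 1).toNat = (t - n - 2).toNat := by omega
          rw [e1, e2, e3, htn, Nat.choose_succ_succ ((t-n-2).toNat) ((t-1).toNat), pow_succ]
          push_cast; ring
  · rw [C'_neg (by omega), C'_neg (by omega), C'_neg (by omega)]; ring

lemma C'_zero_left (t : ℤ) : C' 0 t = if t = 0 then 1 else 0 := by
  by_cases h : t = 0
  · simp [h, C'_zero]
  · by_cases h2 : 0 ≤ t
    · simp [C', h2, h, Nat.choose_eq_zero_of_lt (by omega : 0 < t.toNat)]
    · simp [C'_neg (by omega : t < 0), h]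

lemma C'_symm (w : ℕ) (t : ℤ) : C' w t = C' w (w - t) := by
  by_cases h : t < 0
  · rw [C'_neg h]
    simp only [C', if_pos (by omega : (0:ℤ) ≤ (w:ℤ) - t), if_pos (by positivity : (0:ℤ) ≤ (w:ℤ))]
    rw [Nat.choose_eq_zero_of_lt (by omega)]
    simp
  · by_cases h2 : (w:ℤ) < t
    · rw [C'_neg (by omega : (w:ℤ) - t < 0)]
      simp only [C', if_pos (by omega : (0:ℤ) ≤ t), if_pos (by positivity : (0:ℤ) ≤ (w:ℤ))]
      rw [Nat.choose_eq_zero_of_lt (by omega)]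
      simp
    · simp only [C', if_pos (by omega : (0:ℤ) ≤ t), if_pos (by omega : (0:ℤ) ≤ (w:ℤ) - t),
        if_pos (by positivity : (0:ℤ) ≤ (w:ℤ))]
      have e : ((w:ℤ) - t).toNat = ((w:ℤ)).toNat - t.toNat := by omega
      rw [e, Nat.choose_symm (by omega)]

lemma C'_neg_upper (k s : ℕ) : C' (-(k + 1)) s = (-1) ^ s * ((k + s).choose s : ℤ) := by
  simp only [C', if_pos (by positivity : (0:ℤ) ≤ (s:ℤ)), if_neg (by omega : ¬ (0:ℤ) ≤ -(k+1))]
  have e1 : ((s:ℤ) - -((k:ℤ) + 1) - 1).toNat = k + s := by omega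
  have e2 : ((s:ℤ)).toNat = s := by omega
  rw [e1, e2]

/-- partial alternating sum -/
def T (n j : ℕ) (x r : ℤ) : ℤ :=
  ∑ a ∈ Finset.range (j + 1), (-1) ^ a * (n.choose a : ℤ) * C' (x - a) r

lemma lemA : ∀ (j n : ℕ) (x r : ℤ),
    T (n + 1) (j + 1) x r
      = (-1) ^ (j + 1) * (n.choose (j + 1) : ℤ) * C' (x - 1 - j) r + T n j (x - 1) (r - 1) := by
  intro j
  induction j with
  | zero =>
    intro n x r
    have hp : C' x r = C' (x - 1) r + C' (x - 1) (r - 1) := by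
      have := pascal' (x - 1) r
      rw [show x - 1 + 1 = x by ring] at this
      exact this
    simp only [T, Finset.sum_range_succ, Finset.sum_range_zero, Nat.cast_zero, Nat.cast_one,
      sub_zero, zero_add, Nat.choose_zero_right, Nat.choose_one_right]
    push_cast
    linear_combination hp
  | succ j ih =>
    intro n x r
    have step : T (n + 1) (j + 1 + 1) x r
        = T (n + 1) (j + 1) x r + (-1) ^ (j + 2) * ((n + 1).choose (j + 2) : ℤ) * C' (x - (j + 2)) r := by
      simp only [T, Finset.sum_range_succ]
      push_cast
      ring_nf
    rw [step, ih n x r]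

    have stepT : T n (j + 1) (x - 1) (r - 1)
        = T n j (x - 1) (r - 1) + (-1) ^ (j + 1) * (n.choose (j + 1) : ℤ) * C' (x - 1 - (j + 1)) (r - 1) := by
      simp only [T, Finset.sum_range_succ]
      push_cast
      ring_nf
    rw [stepT]
    have hch : ((n + 1).choose (j + 2) : ℤ) = (n.choose (j + 1) : ℤ) + (n.choose (j + 2) : ℤ) := by
      rw [Nat.choose_succ_succ]
      push_cast; ring
    have hp : C' (x - 1 - j) r = C' (x - 1 - (j + 1)) r + C' (x - 1 - (j + 1)) (r - 1) := by
      have := pascal' (x - 1 - (j + 1)) r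
      rw [show x - 1 - ((j:ℤ) + 1) + 1 = x - 1 - j by ring] at this
      exact this
    rw [hch, hp]
    have e1 : x - ((j:ℤ) + 2) = x - 1 - ((j:ℤ) + 1) := by ring
    rw [e1]
    push_cast
    ring

lemma lemB : ∀ (j n : ℕ) (x r : ℤ),
    T (n + j + 1) j x r
      = ∑ s ∈ Finset.range (j + 1),
          (-1) ^ (j - s) * ((n + j - s).choose (j - s) : ℤ) * C' (x - j) (r - s) := by
  intro j
  induction j with
  | zero => intro n x r; simp [T]
  | succ j ih =>
    intro n x r
    have e0 : n + (j + 1) + 1 = (n + j + 1) + 1 := by ring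
    rw [e0, lemA j (n + j + 1) x r, ih n (x - 1) (r - 1)]
    conv_rhs => rw [Finset.sum_range_succ']
    rw [add_comm]
    congr 1
    · refine Finset.sum_congr rfl ?_
      intro i hi
      have hi' : i ≤ j := by
        have := Finset.mem_range.1 hi; omega
      have e1 : j + 1 - (i + 1) = j - i := by omega
      have e2 : n + (j + 1) - (i + 1) = n + j - i := by omega
      have e3 : x - ((j:ℤ) + 1) = x - 1 - j := by ring
      have e4 : r - ((i:ℤ) + 1) = r - 1 - i := by ring
      rw [e1, e2]
      push_cast
      rw [show x - ((j:ℤ) + 1) = x - 1 - j by ring, show r - ((i:ℤ) + 1) = r - 1 - i by ring]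
    · have e1 : j + 1 - 0 = j + 1 := by omega
      have e2 : n + (j + 1) - 0 = n + j + 1 := by omega
      rw [e1, e2]
      push_cast
      rw [show x - ((j:ℤ) + 1) = x - 1 - j by ring, show r - (0:ℤ) = r by ring]

lemma vandermonde' (A : ℤ) (S : ℕ) :
    ∀ (w : ℕ) (v : ℤ), (∀ s : ℤ, (S:ℤ) < s → s ≤ v → C' A s = 0) →
      ∑ s ∈ Finset.range (S + 1), C' A s * C' w (v - s) = C' (A + w) v := by
  intro w
  induction w with
  | zero =>
    intro v H
    by_cases hv : 0 ≤ v ∧ v ≤ (S:ℤ)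
    · rw [Finset.sum_eq_single_of_mem v.toNat (Finset.mem_range.2 (by omega))]
      · rw [show ((v.toNat : ℤ)) = v by omega, show v - v = 0 by ring,
          show ((0:ℕ):ℤ) = 0 by norm_num, C'_zero, add_zero]
        ring
      · intro b _ hb
        rw [show ((0:ℕ):ℤ) = 0 by norm_num, C'_zero_left, if_neg (by omega : ¬ v - b = 0)]
        ring
    · push_neg at hv
      rw [Finset.sum_eq_zero, show A + ((0:ℕ):ℤ) = A by push_cast; ring]
      · by_cases h0 : 0 ≤ v
        · exact (H v (hv h0) le_rfl).symm
        · rw [C'_neg (by omega)]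
      · intro b hb
        rw [show ((0:ℕ):ℤ) = 0 by norm_num, C'_zero_left, if_neg ?_]
        · ring
        · have := Finset.mem_range.1 hb
          by_cases h0 : 0 ≤ v
          · have hb' : (b:ℤ) ≤ (S:ℤ) := by omega
            have := hv h0
            omega
          · omega
  | succ w ih =>
    intro v H
    have hp : ∀ s : ℤ, C' ((w:ℤ) + 1) (v - s) = C' w (v - s) + C' w (v - 1 - s) := by
      intro s
      rw [pascal' w (v - s), show v - s - 1 = v - 1 - s by ring]
    calc ∑ s ∈ Finset.range (S + 1), C' A s * C' ((w + 1 : ℕ)) (v - s)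
        = ∑ s ∈ Finset.range (S + 1), (C' A s * C' w (v - s) + C' A s * C' w (v - 1 - s)) := by
          refine Finset.sum_congr rfl ?_
          intro s _
          rw [show (((w + 1 : ℕ)):ℤ) = (w:ℤ) + 1 by push_cast; ring, hp s]
          ring
      _ = ∑ s ∈ Finset.range (S + 1), C' A s * C' w (v - s)
            + ∑ s ∈ Finset.range (S + 1), C' A s * C' w (v - 1 - s) := Finset.sum_add_distrib
      _ = C' (A + w) v + C' (A + w) (v - 1) := by
          rw [ih v H, ih (v - 1) (fun s h1 h2 => H s h1 (by omega))]
      _ = C' (A + (w + 1 : ℕ)) v := by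
          rw [show A + ((w + 1 : ℕ) : ℤ) = (A + w) + 1 by push_cast; ring, pascal']

lemma C'_nat_zero (w : ℕ) (t : ℤ) (h : (w:ℤ) < t) : C' w t = 0 := by
  simp only [C', if_pos (by omega : (0:ℤ) ≤ t), if_pos (by positivity : (0:ℤ) ≤ (w:ℤ))]
  rw [Nat.choose_eq_zero_of_lt (by omega)]
  simp

lemma key (k m : ℕ) :
    ∑ a ∈ Finset.range (k + 1), ∑ b ∈ Finset.range (m + 4),
      (-1:ℤ) ^ a * (C (2 * (k:ℤ) + 1) a * C ((m:ℤ) + 3) b * C ((k:ℤ) + 1 - a) ((2 * (m:ℤ) + 5) - b))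
    = C' ((m:ℤ) + 3 - k) ((k:ℤ) - m - 1) := by
  have h1 : ∀ a ∈ Finset.range (k + 1),
      ∑ b ∈ Finset.range (m + 4),
        (-1:ℤ) ^ a * (C (2 * (k:ℤ) + 1) a * C ((m:ℤ) + 3) b * C ((k:ℤ) + 1 - a) ((2 * (m:ℤ) + 5) - b))
      = (-1) ^ a * (((2 * k + 1).choose a : ℕ) : ℤ) * C' ((k:ℤ) + (m:ℤ) + 4 - a) (2 * (m:ℤ) + 5) := by
    intro a ha
    have hak : a ≤ k := by have := Finset.mem_range.1 ha; omega
    have hw : (((k + 1 - a : ℕ)) : ℤ) = (k:ℤ) + 1 - a := by omega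
    have hC1 : C (2 * (k:ℤ) + 1) a = ((2 * k + 1).choose a : ℤ) := by
      rw [show (2 * (k:ℤ) + 1) = ((2 * k + 1 : ℕ) : ℤ) by push_cast; ring,
        C_eq_C' (by positivity), C'_nat]
    calc ∑ b ∈ Finset.range (m + 4),
          (-1:ℤ) ^ a * (C (2 * (k:ℤ) + 1) a * C ((m:ℤ) + 3) b * C ((k:ℤ) + 1 - a) ((2 * (m:ℤ) + 5) - b))
        = (-1) ^ a * (((2 * k + 1).choose a : ℕ) : ℤ) *
            ∑ b ∈ Finset.range (m + 4), C' ((m:ℤ) + 3) b * C' ((k + 1 - a : ℕ)) ((2 * (m:ℤ) + 5) - b) := by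
          rw [Finset.mul_sum]
          refine Finset.sum_congr rfl ?_
          intro b _
          rw [hC1, C_eq_C' (by positivity : (0:ℤ) ≤ (m:ℤ) + 3),
            show ((k:ℤ) + 1 - a) = (((k + 1 - a : ℕ)) : ℤ) from hw.symm,
            C_eq_C' (by positivity)]
          ring
      _ = (-1) ^ a * (((2 * k + 1).choose a : ℕ) : ℤ) * C' (((m:ℤ) + 3) + ((k + 1 - a : ℕ))) (2 * (m:ℤ) + 5) := by
          rw [show m + 4 = (m + 3) + 1 from by omega,
            vandermonde' ((m:ℤ) + 3) (m + 3) (k + 1 - a) (2 * (m:ℤ) + 5) ?_]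
          intro s hs1 hs2
          exact C'_nat_zero (m + 3) s (by push_cast at hs1 ⊢; omega)
      _ = (-1) ^ a * (((2 * k + 1).choose a : ℕ) : ℤ) * C' ((k:ℤ) + (m:ℤ) + 4 - a) (2 * (m:ℤ) + 5) := by
          rw [show ((m:ℤ) + 3) + (((k + 1 - a : ℕ)) : ℤ) = (k:ℤ) + (m:ℤ) + 4 - a by rw [hw]; ring]
  rw [Finset.sum_congr rfl h1]
  have h2 : ∑ a ∈ Finset.range (k + 1),
      (-1:ℤ) ^ a * (((2 * k + 1).choose a : ℕ) : ℤ) * C' ((k:ℤ) + (m:ℤ) + 4 - a) (2 * (m:ℤ) + 5)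
      = T (2 * k + 1) k ((k:ℤ) + (m:ℤ) + 4) (2 * (m:ℤ) + 5) := rfl
  rw [h2, show 2 * k + 1 = k + k + 1 from by ring, lemB k k]
  rw [← Finset.sum_range_reflect]
  rw [show k + 1 - 1 = k from by omega]
  have h3 : ∀ s ∈ Finset.range (k + 1),
      (-1:ℤ) ^ (k - (k - s)) * (((k + k - (k - s)).choose (k - (k - s)) : ℕ) : ℤ) *
        C' ((k:ℤ) + (m:ℤ) + 4 - k) (2 * (m:ℤ) + 5 - ((k - s : ℕ) : ℤ))
      = C' (-((k:ℤ) + 1)) s * C' ((m + 4 : ℕ)) (((k:ℤ) - m - 1) - s) := by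
    intro s hs
    have hsk : s ≤ k := by have := Finset.mem_range.1 hs; omega
    have hks : (((k - s : ℕ)) : ℤ) = (k:ℤ) - s := by omega
    rw [show k - (k - s) = s from by omega, show k + k - (k - s) = k + s from by omega,
      ← C'_neg_upper k s, hks,
      show ((k:ℤ) + (m:ℤ) + 4 - k) = (((m + 4 : ℕ)) : ℤ) by push_cast; ring,
      show (2 * (m:ℤ) + 5 - ((k:ℤ) - s)) = ((m + 4 : ℕ) : ℤ) - (((k:ℤ) - m - 1) - s) by push_cast; ring,
      ← C'_symm]
  rw [Finset.sum_congr rfl h3,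
    vandermonde' (-((k:ℤ) + 1)) k (m + 4) ((k:ℤ) - m - 1) (by intro s h1 h2; omega),
    show (-((k:ℤ) + 1) + ((m + 4 : ℕ) : ℤ)) = (m:ℤ) + 3 - k by push_cast; ring]

lemma lemD (v : ℤ) :
    ((C' (2 - v) v : ℤ) : ℚ) = (-1:ℚ) ^ v * ((C (2 * v - 3) v : ℤ) : ℚ) := by
  by_cases hv : 0 ≤ v
  · have hpow : ((-1:ℚ) ^ v) = (-1:ℚ) ^ v.toNat := by
      rw [← zpow_natCast, Int.toNat_of_nonneg hv]
    rw [hpow]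
    by_cases hv3 : 3 ≤ v
    · simp only [C, C', if_pos hv, if_neg (by omega : ¬ (0:ℤ) ≤ 2 - v),
        if_pos (by omega : (0:ℤ) ≤ 2 * v - 3)]
      rw [show (v - (2 - v) - 1) = 2 * v - 3 by ring]
      push_cast
      ring
    · interval_cases v <;> norm_num [C, C'] <;> rw [show Int.toNat 2 = 2 from rfl] <;> norm_num
  · rw [C'_neg (by omega)]
    simp only [C, if_neg (by omega : ¬ (0:ℤ) ≤ 2 * v - 3), if_neg hv,
      if_neg (by omega : ¬ v ≤ 2 * v - 3)]
    norm_num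

/-- For `k ≥ 0`, `l ≤ −2`:
`∑_{a=0}^{k} ∑_{b=0}^{−l+1} (−1)^a C(2k+1,a) C(−l+1,b) C(k+1−a, −b−2l+1)
  = (−1)^{l+k+1} C(2k+2l−1, l+k+1)`. -/
theorem stmt11 (k : ℕ) (l : ℤ) (hl : l ≤ -2) :
    ∑ a ∈ Finset.range (k + 1), ∑ b ∈ Finset.range (-l + 2).toNat,
        (-1 : ℚ) ^ a *
          (C (2 * k + 1) a * C (-l + 1) b *
            C ((k : ℤ) + 1 - a) (-(b : ℤ) - 2 * l + 1) : ℤ) =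
      (-1 : ℚ) ^ (l + (k : ℤ) + 1) * (C (2 * k + 2 * l - 1) (l + (k : ℤ) + 1) : ℤ) := by

  obtain ⟨m, hm⟩ : ∃ m : ℕ, (m:ℤ) = -l - 2 := ⟨(-l - 2).toNat, Int.toNat_of_nonneg (by omega)⟩
  have hrange : (-l + 2).toNat = m + 4 := by omega
  have hLHS : ∑ a ∈ Finset.range (k + 1), ∑ b ∈ Finset.range (-l + 2).toNat,
        (-1 : ℚ) ^ a *
          (C (2 * k + 1) a * C (-l + 1) b *
            C ((k : ℤ) + 1 - a) (-(b : ℤ) - 2 * l + 1) : ℤ)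
      = ((∑ a ∈ Finset.range (k + 1), ∑ b ∈ Finset.range (m + 4),
          (-1:ℤ) ^ a * (C (2 * (k:ℤ) + 1) a * C ((m:ℤ) + 3) b *
            C ((k:ℤ) + 1 - a) ((2 * (m:ℤ) + 5) - b)) : ℤ) : ℚ) := by
    rw [hrange]
    push_cast
    refine Finset.sum_congr rfl ?_
    intro a _
    refine Finset.sum_congr rfl ?_
    intro b _
    rw [show (-l + 1 : ℤ) = (m:ℤ) + 3 by omega,
      show (-(b:ℤ) - 2 * l + 1) = (2 * (m:ℤ) + 5) - b by omega]
  rw [hLHS, key k m]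
  have hv : (k:ℤ) - m - 1 = l + k + 1 := by omega
  have h2v : (m:ℤ) + 3 - k = 2 - (l + (k:ℤ) + 1) := by omega
  rw [hv, h2v, lemD (l + (k:ℤ) + 1),
    show (2 * (l + (k:ℤ) + 1) - 3) = 2 * (k:ℤ) + 2 * l - 1 by ring]
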